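/- With the notation of the paper, S_ρ(Φ) = H^λ(b_ρ(Φ)) if and only if Φ(eᵢ) belongs to the abelian algebra B generated by {pⱼ} for every i with λᵢ ≠ 0, equivalently Φ(eᵢ) = Σⱼ b_{ij} pⱼ for all such i. -/

import Mathlib

open Matrix BigOperators ComplexOrder

/-- Entropy function `η(t) = -t log t` (with `η(0)=0` since `Real.log 0 = 0`). -/
noncomputable def eta (t : ℝ) : ℝ := -(t * Real.log t)

/-- Von Neumann entropy of a matrix: sum of `η` over eigenvalues (0 if not Hermitian). -/
noncomputable def vnEntropy {n : ℕ} (D : Matrix (Fin n) (Fin n) ℂ) : ℝ :=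
  if h : D.IsHermitian then ∑ i, eta (h.eigenvalues i) else 0

/-- Positive, unital, trace-preserving linear map on `M_n(ℂ)`. -/
def IsPUTP {n : ℕ} (Φ : Matrix (Fin n) (Fin n) ℂ →ₗ[ℂ] Matrix (Fin n) (Fin n) ℂ) : Prop :=
  (∀ x, x.PosSemidef → (Φ x).PosSemidef) ∧ Φ 1 = 1 ∧ ∀ x, (Φ x).trace = x.trace

/-- A family of mutually orthogonal rank-one (trace-one) self-adjoint projections
summing to the identity. -/
def IsSpectralFamily {n : ℕ} (e : Fin n → Matrix (Fin n) (Fin n) ℂ) : Prop :=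
  (∀ i, (e i).IsHermitian) ∧ (∀ i j, e i * e j = if i = j then e i else 0) ∧
    (∑ i, e i = 1) ∧ (∀ i, (e i).trace = 1)

/-! Diagonalise `X = ∑ₖ xₖ qₖ`. For two spectral families the overlaps `Tr(pⱼ qₖ)` form a doubly
stochastic matrix `M`, and `b = M x`. Jensen's inequality for the strictly concave `η`, row by row,
gives `S(X) = ∑ₖ η(xₖ) ≤ ∑ⱼ η(bⱼ)`, with equality only if `xₖ = bⱼ` whenever `Tr(pⱼ qₖ) ≠ 0`; as
`Tr(pⱼ qₖ) = 0` forces `qₖ pⱼ = 0`, this means `X pⱼ = bⱼ pⱼ`, i.e. `X = ∑ⱼ bⱼ pⱼ`. Conversely, if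
`X = ∑ⱼ bⱼ pⱼ` then `x = Mᵀ b`, and the same inequality runs the other way.
The theorem is the `λ`-weighted sum of this statement for `X = Φ(eᵢ)`; the weights are nonnegative
because `D ≥ 0`. -/

section DoublyStochastic

open Real

variable {m : Type*} [Fintype m] [DecidableEq m] {M : Matrix m m ℝ} {x : m → ℝ}

lemma mulVec_comp_negMulLog_le (hM : M ∈ doublyStochastic ℝ m) (hx : 0 ≤ x) (j : m) :
    (M *ᵥ fun k ↦ negMulLog (x k)) j ≤ negMulLog ((M *ᵥ x) j) := by
  simpa [mulVec, dotProduct] using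
    concaveOn_negMulLog.le_map_sum (t := Finset.univ) (fun k _ ↦ nonneg_of_mem_doublyStochastic hM)
      (sum_row_of_mem_doublyStochastic hM j) (fun k _ ↦ hx k)

theorem sum_negMulLog_le_sum_negMulLog_mulVec (hM : M ∈ doublyStochastic ℝ m) (hx : 0 ≤ x) :
    ∑ k, negMulLog (x k) ≤ ∑ j, negMulLog ((M *ᵥ x) j) := by
  rw [← sum_mulVec_of_mem_doublyStochastic hM]
  exact Finset.sum_le_sum fun j _ ↦ mulVec_comp_negMulLog_le hM hx j

theorem eq_mulVec_of_sum_negMulLog_eq (hM : M ∈ doublyStochastic ℝ m) (hx : 0 ≤ x)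
    (h : ∑ k, negMulLog (x k) = ∑ j, negMulLog ((M *ᵥ x) j)) {j k : m} (hjk : M j k ≠ 0) :
    x k = (M *ᵥ x) j := by
  rw [← sum_mulVec_of_mem_doublyStochastic hM,
    Finset.sum_eq_sum_iff_of_le fun j _ ↦ mulVec_comp_negMulLog_le hM hx j] at h
  have hjensen := strictConcaveOn_negMulLog.map_sum_eq_iff' (t := Finset.univ)
    (fun k _ ↦ nonneg_of_mem_doublyStochastic hM) (sum_row_of_mem_doublyStochastic hM j)
    (fun k _ ↦ hx k)
  simp only [Finset.mem_univ, smul_eq_mul, forall_const] at hjensen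
  simp only [mulVec, dotProduct] at h ⊢
  exact hjensen.mp (h j (Finset.mem_univ j)).symm k hjk

end DoublyStochastic

lemma trace_conjTranspose_mul_self_of_isStarProjection {ι R : Type*} [Fintype ι] [CommRing R]
    [StarRing R] {P Q : Matrix ι ι R} (hP : IsStarProjection P) (hQ : IsStarProjection Q) :
    ((Q * P)ᴴ * (Q * P)).trace = (P * Q).trace := by
  have hPs : Pᴴ = P := hP.isSelfAdjoint
  have hQs : Qᴴ = Q := hQ.isSelfAdjoint
  rw [conjTranspose_mul, hPs, hQs, mul_assoc, ← mul_assoc Q, hQ.isIdempotentElem.eq,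
    ← mul_assoc, trace_mul_comm, ← mul_assoc, hP.isIdempotentElem.eq]

lemma trace_mul_nonneg_of_posSemidef {ι : Type*} [Fintype ι] {X P : Matrix ι ι ℂ}
    (hX : X.PosSemidef) (hP : IsStarProjection P) : 0 ≤ (X * P).trace := by
  have hPs : Pᴴ = P := hP.isSelfAdjoint
  have h := (hX.conjTranspose_mul_mul_same P).trace_nonneg
  rwa [hPs, trace_mul_cycle, hP.isIdempotentElem.eq, trace_mul_comm] at h

namespace IsSpectralFamily

variable {n : ℕ} {e p q : Fin n → Matrix (Fin n) (Fin n) ℂ}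

lemma isStarProjection (he : IsSpectralFamily e) (i : Fin n) : IsStarProjection (e i) :=
  ⟨by simpa [IsIdempotentElem] using he.2.1 i i, (he.1 i).isSelfAdjoint⟩

lemma posSemidef (he : IsSpectralFamily e) (i : Fin n) : (e i).PosSemidef := by
  have h : (e i)ᴴ * e i = e i := by simpa [(he.1 i).eq] using he.2.1 i i
  simpa [h] using posSemidef_conjTranspose_mul_self (e i)

lemma trace_sum_smul_mul (he : IsSpectralFamily e) (c : Fin n → ℂ) (i : Fin n) :
    ((∑ k, c k • e k) * e i).trace = c i := by
  simp [Finset.sum_mul, he.2.1, he.2.2.2]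

lemma nonneg_of_posSemidef_eq_sum_smul (he : IsSpectralFamily e) {D : Matrix (Fin n) (Fin n) ℂ}
    (hD : D.PosSemidef) {c : Fin n → ℝ} (hDc : D = ∑ k, (c k : ℂ) • e k) (i : Fin n) :
    0 ≤ c i := by
  have h := trace_mul_nonneg_of_posSemidef hD (he.isStarProjection i)
  rwa [hDc, he.trace_sum_smul_mul, Complex.zero_le_real] at h

lemma conj (he : IsSpectralFamily e) (U : unitaryGroup (Fin n) ℂ) :
    IsSpectralFamily fun k ↦ Unitary.conjStarAlgAut ℂ _ U (e k) := by
  refine ⟨fun k ↦ ?_, fun i j ↦ ?_, ?_, fun k ↦ ?_⟩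
  · exact ((he.1 k).isSelfAdjoint.map (Unitary.conjStarAlgAut ℂ _ U) : _)
  · rw [← map_mul, he.2.1]; split_ifs <;> simp
  · rw [← map_sum, he.2.2.1, map_one]
  · simp [trace_mul_cycle, he.2.2.2]

end IsSpectralFamily

lemma isSpectralFamily_single (n : ℕ) :
    IsSpectralFamily fun k : Fin n ↦ single k k (1 : ℂ) := by
  refine ⟨fun k ↦ ?_, fun i j ↦ ?_, sum_single_one, fun k ↦ trace_single_eq_same k 1⟩
  · simp [IsHermitian, conjTranspose_single]
  · by_cases h : i = j
    · subst h; simp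
    · simp [h]

lemma Matrix.IsHermitian.exists_isSpectralFamily {n : ℕ} {A : Matrix (Fin n) (Fin n) ℂ}
    (hA : A.IsHermitian) :
    ∃ q, IsSpectralFamily q ∧ A = ∑ k, (hA.eigenvalues k : ℂ) • q k := by
  refine ⟨_, (isSpectralFamily_single n).conj hA.eigenvectorUnitary, ?_⟩
  conv_lhs => rw [hA.spectral_theorem, ← sum_single_eq_diagonal]
  simp only [map_sum, Function.comp_apply, ← map_smul, smul_single, smul_eq_mul, mul_one]
  rfl

def overlap {n : ℕ} (p q : Fin n → Matrix (Fin n) (Fin n) ℂ) : Matrix (Fin n) (Fin n) ℝ :=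
  of fun j k ↦ (p j * q k).trace.re

section Overlap

variable {n : ℕ} {p q : Fin n → Matrix (Fin n) (Fin n) ℂ}

lemma ofReal_overlap (hp : IsSpectralFamily p) (hq : IsSpectralFamily q) (j k : Fin n) :
    (overlap p q j k : ℂ) = (p j * q k).trace :=
  (Complex.eq_re_of_ofReal_le (r := 0) (by
    simpa using trace_mul_nonneg_of_posSemidef (hp.posSemidef j) (hq.isStarProjection k))).symm

lemma overlap_mem_doublyStochastic (hp : IsSpectralFamily p) (hq : IsSpectralFamily q) :
    overlap p q ∈ doublyStochastic ℝ (Fin n) := by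
  refine mem_doublyStochastic_iff_sum.mpr ⟨fun j k ↦ ?_, fun j ↦ ?_, fun k ↦ ?_⟩
  · exact Complex.zero_le_real.mp <| (ofReal_overlap hp hq j k).symm ▸
      trace_mul_nonneg_of_posSemidef (hp.posSemidef j) (hq.isStarProjection k)
  · apply Complex.ofReal_injective
    simp [ofReal_overlap hp hq, ← trace_sum, ← Finset.mul_sum, hq.2.2.1, hp.2.2.2]
  · apply Complex.ofReal_injective
    simp [ofReal_overlap hp hq, ← trace_sum, ← Finset.sum_mul, hp.2.2.1, hq.2.2.2]

lemma eq_overlap_mulVec (hp : IsSpectralFamily p) (hq : IsSpectralFamily q)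
    {X : Matrix (Fin n) (Fin n) ℂ} {x b : Fin n → ℝ} (hX : X = ∑ k, (x k : ℂ) • q k)
    (hb : ∀ j, (b j : ℂ) = (X * p j).trace) :
    b = overlap p q *ᵥ x := by
  funext j
  apply Complex.ofReal_injective
  simp only [hb, hX, Finset.sum_mul, smul_mul_assoc, trace_sum, trace_smul, mulVec, dotProduct,
    Complex.ofReal_sum, Complex.ofReal_mul, ofReal_overlap hp hq, trace_mul_comm (q _), smul_eq_mul,
    mul_comm]

lemma mul_eq_zero_of_overlap_eq_zero (hp : IsSpectralFamily p) (hq : IsSpectralFamily q)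
    {j k : Fin n} (h : overlap p q j k = 0) : q k * p j = 0 := by
  rw [← trace_conjTranspose_mul_self_eq_zero_iff, trace_conjTranspose_mul_self_of_isStarProjection
    (hp.isStarProjection j) (hq.isStarProjection k), ← ofReal_overlap hp hq, h, Complex.ofReal_zero]

lemma eq_sum_smul_of_overlap_ne_zero (hp : IsSpectralFamily p) (hq : IsSpectralFamily q)
    {X : Matrix (Fin n) (Fin n) ℂ} {x b : Fin n → ℝ} (hX : X = ∑ k, (x k : ℂ) • q k)
    (h : ∀ j k, overlap p q j k ≠ 0 → x k = b j) :
    X = ∑ j, (b j : ℂ) • p j := by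
  have hXp : ∀ j, X * p j = (b j : ℂ) • p j := by
    intro j
    calc X * p j = ∑ k, (x k : ℂ) • (q k * p j) := by simp [hX, Finset.sum_mul]
      _ = ∑ k, (b j : ℂ) • (q k * p j) := by
        refine Finset.sum_congr rfl fun k _ ↦ ?_
        by_cases hjk : overlap p q j k = 0
        · simp [mul_eq_zero_of_overlap_eq_zero hp hq hjk]
        · rw [h j k hjk]
      _ = (b j : ℂ) • p j := by rw [← Finset.smul_sum, ← Finset.sum_mul, hq.2.2.1, one_mul]
  calc X = ∑ j, X * p j := by rw [← Finset.mul_sum, hp.2.2.1, mul_one]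
    _ = ∑ j, (b j : ℂ) • p j := Finset.sum_congr rfl fun j _ ↦ hXp j

end Overlap

lemma eta_eq_negMulLog : eta = Real.negMulLog :=
  Real.negMulLog_eq_neg.symm

lemma vnEntropy_eq_sum_negMulLog_eigenvalues {n : ℕ} {A : Matrix (Fin n) (Fin n) ℂ}
    (hA : A.IsHermitian) : vnEntropy A = ∑ k, Real.negMulLog (hA.eigenvalues k) := by
  rw [vnEntropy, dif_pos hA, eta_eq_negMulLog]

section Pinching

variable {n : ℕ} {X : Matrix (Fin n) (Fin n) ℂ} {p : Fin n → Matrix (Fin n) (Fin n) ℂ}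
  {b : Fin n → ℝ}

theorem vnEntropy_le_sum_eta_trace_mul (hX : X.PosSemidef) (hp : IsSpectralFamily p)
    (hb : ∀ j, (b j : ℂ) = (X * p j).trace) :
    vnEntropy X ≤ ∑ j, eta (b j) := by
  obtain ⟨q, hq, hXq⟩ := hX.1.exists_isSpectralFamily
  have hbx := eq_overlap_mulVec hp hq hXq hb
  rw [vnEntropy_eq_sum_negMulLog_eigenvalues hX.1, hbx, eta_eq_negMulLog]
  exact sum_negMulLog_le_sum_negMulLog_mulVec (overlap_mem_doublyStochastic hp hq)
    hX.eigenvalues_nonneg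

theorem vnEntropy_eq_sum_eta_trace_mul_iff (hX : X.PosSemidef) (hp : IsSpectralFamily p)
    (hb : ∀ j, (b j : ℂ) = (X * p j).trace) :
    vnEntropy X = ∑ j, eta (b j) ↔ X = ∑ j, (b j : ℂ) • p j := by
  obtain ⟨q, hq, hXq⟩ := hX.1.exists_isSpectralFamily
  have hbx := eq_overlap_mulVec hp hq hXq hb
  constructor
  · intro h
    rw [vnEntropy_eq_sum_negMulLog_eigenvalues hX.1, eta_eq_negMulLog, hbx] at h
    refine eq_sum_smul_of_overlap_ne_zero hp hq hXq fun j k hjk ↦ ?_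
    rw [hbx]
    exact eq_mulVec_of_sum_negMulLog_eq (overlap_mem_doublyStochastic hp hq)
      hX.eigenvalues_nonneg h hjk
  · intro hXp
    refine le_antisymm (vnEntropy_le_sum_eta_trace_mul hX hp hb) ?_
    have hxb := eq_overlap_mulVec hq hp hXp fun k ↦ by
      conv_rhs => rw [hXq]
      exact (hq.trace_sum_smul_mul (fun k ↦ (hX.1.eigenvalues k : ℂ)) k).symm
    have hb_nonneg : 0 ≤ b := fun j ↦ Complex.zero_le_real.mp <|
      (hb j).symm ▸ trace_mul_nonneg_of_posSemidef hX (hp.isStarProjection j)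
    rw [vnEntropy_eq_sum_negMulLog_eigenvalues hX.1, eta_eq_negMulLog]
    conv_rhs => rw [hxb]
    exact sum_negMulLog_le_sum_negMulLog_mulVec (overlap_mem_doublyStochastic hq hp) hb_nonneg

end Pinching

theorem stmt_14_general {n : ℕ} (Φ : Matrix (Fin n) (Fin n) ℂ →ₗ[ℂ] Matrix (Fin n) (Fin n) ℂ)
    (hΦ : IsPUTP Φ)
    (D : Matrix (Fin n) (Fin n) ℂ) (hD : D.PosSemidef)
    (lam : Fin n → ℝ) (e p : Fin n → Matrix (Fin n) (Fin n) ℂ)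
    (he : IsSpectralFamily e) (hp : IsSpectralFamily p)
    (hDdec : D = ∑ i, (lam i : ℂ) • e i)
    (b : Fin n → Fin n → ℝ)
    (hb : ∀ i j, (b i j : ℂ) = (Φ (e i) * p j).trace) :
    (∑ i, lam i * vnEntropy (Φ (e i))) = (∑ i, lam i * ∑ j, eta (b i j)) ↔
      ∀ i, lam i ≠ 0 → Φ (e i) = ∑ j, (b i j : ℂ) • p j := by
  have hlam := he.nonneg_of_posSemidef_eq_sum_smul hD hDdec
  have hΦe i : (Φ (e i)).PosSemidef := hΦ.1 _ (he.posSemidef i)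
  rw [Finset.sum_eq_sum_iff_of_le fun i _ ↦ mul_le_mul_of_nonneg_left
    (vnEntropy_le_sum_eta_trace_mul (hΦe i) hp (hb i)) (hlam i)]
  refine forall_congr' fun i ↦ ?_
  rw [← vnEntropy_eq_sum_eta_trace_mul_iff (hΦe i) hp (hb i), mul_eq_mul_left_iff]
  simp only [Finset.mem_univ, true_implies]
  tauto

theorem stmt_14 {n : ℕ} (Φ : Matrix (Fin n) (Fin n) ℂ →ₗ[ℂ] Matrix (Fin n) (Fin n) ℂ)
    (hΦ : IsPUTP Φ)
    (D : Matrix (Fin n) (Fin n) ℂ) (hD : D.PosSemidef) (htr : D.trace = 1)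
    (lam mu : Fin n → ℝ) (e p : Fin n → Matrix (Fin n) (Fin n) ℂ)
    (he : IsSpectralFamily e) (hp : IsSpectralFamily p)
    (hDdec : D = ∑ i, (lam i : ℂ) • e i)
    (hΦDdec : Φ D = ∑ j, (mu j : ℂ) • p j)
    (b : Fin n → Fin n → ℝ)
    (hb : ∀ i j, (b i j : ℂ) = (Φ (e i) * p j).trace) :
    (∑ i, lam i * vnEntropy (Φ (e i))) = (∑ i, lam i * ∑ j, eta (b i j)) ↔
      ∀ i, lam i ≠ 0 → Φ (e i) = ∑ j, (b i j : ℂ) • p j :=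
  stmt_14_general Φ hΦ D hD lam e p he hp hDdec b hb
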